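/- For the standard G₂ 4-form σ₀ = e^{3456}+e^{1256}+e^{1234}+e^{2467}-e^{2357}-e^{1457}-e^{1367} on ℝ⁷ and any two linearly independent vectors X, Y ∈ ℝ⁷, the 2-form ι_Xι_Yσ₀ satisfies (ι_Xι_Yσ₀)∧(ι_Xι_Yσ₀) ≠ 0 in Λ⁴(ℝ⁷)*. -/

import Mathlib

/-!
The 2-form `ι_X ι_Y σ₀` depends linearly on the bivector `p = X ∧ Y`. A direct computation in
the exterior algebra gives, for every bivector `p`,
`ι_p σ₀ ∧ ι_p σ₀ ∧ ⋆σ₀ = (2 ‖p‖² + 3 ⟨p ∧ p, σ₀⟩) vol`.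
For `p = X ∧ Y` the second term vanishes (Plücker relations), and `‖X ∧ Y‖²` is the Gram
determinant of `X, Y`, which is nonzero by linear independence.
-/

noncomputable section

/-- We model the dual `g*` of a 7-dimensional real Lie algebra on `ℝ⁷`. -/
abbrev V7 : Type := Fin 7 → ℝ

/-- The exterior algebra `Λ•g*` of forms. -/
abbrev E7 : Type := ExteriorAlgebra ℝ V7

/-- The generators `e^1, …, e^7` (indexed `0, …, 6`). -/
def ε (i : Fin 7) : E7 := ExteriorAlgebra.ι ℝ (Pi.single i 1)

/-- The degree-`k` component `Λ^k g*` of the exterior algebra. -/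
def deg (k : ℕ) : Submodule ℝ E7 :=
  LinearMap.range (ExteriorAlgebra.ι ℝ : V7 →ₗ[ℝ] E7) ^ k

/-- Dualization `g → g**` induced by the standard basis (identifying `g ≅ ℝ⁷`). -/
def dualize : V7 →ₗ[ℝ] Module.Dual ℝ V7 := (Pi.basisFun ℝ (Fin 7)).toDual

/-- Interior product (contraction) `ι_v` of forms with a vector `v ∈ g`. -/
def ic (v : V7) : E7 →ₗ[ℝ] E7 := CliffordAlgebra.contractLeft (dualize v)

lemma ic_sq (v : V7) : (ic v) * (ic v) = 0 := by
  ext x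
  simp [ic, Module.End.mul_apply, CliffordAlgebra.contractLeft_contractLeft]

/-- Contraction of forms by multivectors (identified with elements of `E7` via the
basis), extended multiplicatively from contraction by vectors. -/
def contra : E7 →ₐ[ℝ] Module.End ℝ E7 :=
  ExteriorAlgebra.lift ℝ
    ⟨{ toFun := ic,
       map_add' := by intro a b; ext x; simp [ic],
       map_smul' := by intro c a; ext x; simp [ic] }, fun v => ic_sq v⟩

/-- The standard volume form `e^{1234567}`. -/
def vol7 : E7 := ε 0 * ε 1 * ε 2 * ε 3 * ε 4 * ε 5 * ε 6

/-- The standard `G₂` 3-form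
`φ₀ = e^{127}+e^{347}+e^{567}+e^{135}-e^{146}-e^{236}-e^{245}`. -/
def phi0 : E7 :=
  ε 0*ε 1*ε 6 + ε 2*ε 3*ε 6 + ε 4*ε 5*ε 6 + ε 0*ε 2*ε 4
    - ε 0*ε 3*ε 5 - ε 1*ε 2*ε 5 - ε 1*ε 3*ε 4

/-- The standard `G₂` 4-form
`σ₀ = e^{3456}+e^{1256}+e^{1234}+e^{2467}-e^{2357}-e^{1457}-e^{1367}` (the Hodge dual
of `φ₀` for the Euclidean metric and standard orientation). -/
def sigma0 : E7 :=
  ε 2*ε 3*ε 4*ε 5 + ε 0*ε 1*ε 4*ε 5 + ε 0*ε 1*ε 2*ε 3 + ε 1*ε 3*ε 5*ε 6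
    - ε 1*ε 2*ε 4*ε 6 - ε 0*ε 3*ε 4*ε 6 - ε 0*ε 2*ε 5*ε 6

/-- A 4-form is positive (stable) if it lies in the `GL(7,ℝ)`-orbit of the standard
`G₂` 4-form `σ₀`. -/
def Positive4 (σ : E7) : Prop :=
  ∃ A : V7 ≃ₗ[ℝ] V7, ExteriorAlgebra.map (A.toLinearMap) sigma0 = σ

/-- `IsCE dg D` says that `D` is the Chevalley–Eilenberg differential, extended as an
odd (degree-1) derivation to `Λ•g*`, of the Lie algebra whose structure equations are
`d e^i = dg i`: it kills constants and satisfies the graded Leibniz rule against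
degree-one elements (this characterizes `D` uniquely). -/
def IsCE (dg : Fin 7 → E7) (D : E7 →ₗ[ℝ] E7) : Prop :=
  D 1 = 0 ∧ ∀ (i : Fin 7) (y : E7), D (ε i * y) = dg i * y - ε i * D y

lemma dualize_single (v : V7) (i : Fin 7) : dualize v (Pi.single i 1) = v i := by
  rw [dualize, ← Pi.basisFun_apply, Module.Basis.toDual_apply_left, Pi.basisFun_repr]

lemma ic_ε (v : V7) (i : Fin 7) : ic v (ε i) = v i • 1 := by
  rw [ic, ε, CliffordAlgebra.contractLeft_ι, dualize_single, Algebra.algebraMap_eq_smul_one]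

lemma ic_one (v : V7) : ic v 1 = 0 := by
  simp [ic]

lemma ic_ε_mul (v : V7) (i : Fin 7) (x : E7) : ic v (ε i * x) = v i • x - ε i * ic v x := by
  rw [ic, ε, CliffordAlgebra.contractLeft_ι_mul, dualize_single]

lemma ε_mul_self (i : Fin 7) : ε i * ε i = 0 := ExteriorAlgebra.ι_sq_zero _

lemma ε_mul_ε_mul_self (i : Fin 7) (x : E7) : ε i * (ε i * x) = 0 := by
  rw [← mul_assoc, ε_mul_self, zero_mul]

/- The guard `j < i` turns anticommutation into a terminating sorting rule for `simp`. -/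
lemma ε_mul_ε_of_lt {i j : Fin 7} (_ : j < i) : ε i * ε j = -(ε j * ε i) :=
  eq_neg_of_add_eq_zero_left (ExteriorAlgebra.ι_add_mul_swap _ _)

lemma ε_mul_ε_mul_of_lt {i j : Fin 7} (h : j < i) (x : E7) :
    ε i * (ε j * x) = -(ε j * (ε i * x)) := by
  rw [← mul_assoc, ε_mul_ε_of_lt h, neg_mul, mul_assoc]

lemma vol7_ne_zero : vol7 ≠ 0 := by
  have hcontract : ic (Pi.single 0 1) (ic (Pi.single 1 1) (ic (Pi.single 2 1)
      (ic (Pi.single 3 1) (ic (Pi.single 4 1) (ic (Pi.single 5 1) (ic (Pi.single 6 1) vol7))))))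
      = -1 := by
    simp only [vol7, mul_assoc]
    simp +decide only [ic_ε_mul, ic_ε, ic_one, Pi.single_apply, if_true, if_false,
      one_smul, zero_smul, sub_zero, zero_sub, map_neg, neg_neg, neg_zero, mul_zero, mul_one]
  intro h
  simp [h] at hcontract

section Plucker

variable {ι R : Type*} [CommRing R]

def wedgeCoord (X Y : ι → R) (i j : ι) : R := X i * Y j - X j * Y i

def pluckerForm (p : ι → ι → R) (a b c d : ι) : R := p a b * p c d - p a c * p b d + p a d * p b c

lemma pluckerForm_wedgeCoord (X Y : ι → R) (a b c d : ι) :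
    pluckerForm (wedgeCoord X Y) a b c d = 0 := by
  simp only [pluckerForm, wedgeCoord]
  ring

end Plucker

lemma det_gram_eq_sum_sq_wedgeCoord (X Y : V7) :
    (Matrix.gram ℝ ![WithLp.toLp 2 X, WithLp.toLp 2 Y]).det =
      ∑ a, ∑ b with a < b, wedgeCoord X Y a b ^ 2 := by
  simp only [Matrix.det_fin_two, Matrix.gram_apply, Matrix.cons_val_zero, Matrix.cons_val_one,
    PiLp.inner_apply, RCLike.inner_apply, conj_trivial, Finset.sum_filter, Fin.sum_univ_seven,
    wedgeCoord]
  simp +decide only [if_true, if_false]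
  ring

lemma sum_sq_wedgeCoord_ne_zero {X Y : V7} (h : LinearIndependent ℝ ![X, Y]) :
    ∑ a, ∑ b with a < b, wedgeCoord X Y a b ^ 2 ≠ 0 := by
  rw [← det_gram_eq_sum_sq_wedgeCoord, Matrix.det_gram_ne_zero_iff_linearIndependent,
    LinearIndependent.pair_iff]
  rw [LinearIndependent.pair_iff] at h
  intro s t hst
  exact h s t (by simpa using congrArg WithLp.ofLp hst)

/- `ι_p σ₀` for the bivector `p = ∑_{a < b} p a b • e_a ∧ e_b`. -/
def contractSigma0 (p : Fin 7 → Fin 7 → ℝ) : E7 :=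
  (-p 2 3 - p 4 5) • (ε 0 * ε 1)
    + (p 1 3 + p 5 6) • (ε 0 * ε 2)
    + (-p 1 2 + p 4 6) • (ε 0 * ε 3)
    + (p 1 5 - p 3 6) • (ε 0 * ε 4)
    + (-p 1 4 - p 2 6) • (ε 0 * ε 5)
    + (p 2 5 + p 3 4) • (ε 0 * ε 6)
    + (-p 0 3 + p 4 6) • (ε 1 * ε 2)
    + (p 0 2 - p 5 6) • (ε 1 * ε 3)
    + (-p 0 5 - p 2 6) • (ε 1 * ε 4)
    + (p 0 4 + p 3 6) • (ε 1 * ε 5)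
    + (p 2 4 - p 3 5) • (ε 1 * ε 6)
    + (-p 0 1 - p 4 5) • (ε 2 * ε 3)
    + (p 1 6 + p 3 5) • (ε 2 * ε 4)
    + (p 0 6 - p 3 4) • (ε 2 * ε 5)
    + (-p 0 5 - p 1 4) • (ε 2 * ε 6)
    + (p 0 6 - p 2 5) • (ε 3 * ε 4)
    + (-p 1 6 + p 2 4) • (ε 3 * ε 5)
    + (-p 0 4 + p 1 5) • (ε 3 * ε 6)
    + (-p 0 1 - p 2 3) • (ε 4 * ε 5)
    + (p 0 3 + p 1 2) • (ε 4 * ε 6)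
    + (p 0 2 - p 1 3) • (ε 5 * ε 6)

def starSigma0 : E7 :=
  ε 0 * ε 1 * ε 6 + ε 2 * ε 3 * ε 6 + ε 4 * ε 5 * ε 6 - ε 0 * ε 2 * ε 4
    + ε 0 * ε 3 * ε 5 + ε 1 * ε 2 * ε 5 + ε 1 * ε 3 * ε 4

def contractSigma0WedgeStar (p : Fin 7 → Fin 7 → ℝ) : E7 :=
  (p 0 2 - p 1 3 - 2 * p 5 6) • (ε 0 * ε 1 * ε 2 * ε 3 * ε 4)
    + (-p 0 3 - p 1 2 + 2 * p 4 6) • (ε 0 * ε 1 * ε 2 * ε 3 * ε 5)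
    + (-p 0 1 - p 2 3 - 2 * p 4 5) • (ε 0 * ε 1 * ε 2 * ε 3 * ε 6)
    + (-p 0 4 + p 1 5 - 2 * p 3 6) • (ε 0 * ε 1 * ε 2 * ε 4 * ε 5)
    + (p 1 6 - p 2 4 + 2 * p 3 5) • (ε 0 * ε 1 * ε 2 * ε 4 * ε 6)
    + (p 0 6 - p 2 5 - 2 * p 3 4) • (ε 0 * ε 1 * ε 2 * ε 5 * ε 6)
    + (p 0 5 + p 1 4 + 2 * p 2 6) • (ε 0 * ε 1 * ε 3 * ε 4 * ε 5)
    + (p 0 6 - 2 * p 2 5 - p 3 4) • (ε 0 * ε 1 * ε 3 * ε 4 * ε 6)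
    + (-p 1 6 + 2 * p 2 4 - p 3 5) • (ε 0 * ε 1 * ε 3 * ε 5 * ε 6)
    + (-p 0 1 - 2 * p 2 3 - p 4 5) • (ε 0 * ε 1 * ε 4 * ε 5 * ε 6)
    + (-2 * p 1 6 + p 2 4 - p 3 5) • (ε 0 * ε 2 * ε 3 * ε 4 * ε 5)
    + (-p 0 4 + 2 * p 1 5 - p 3 6) • (ε 0 * ε 2 * ε 3 * ε 4 * ε 6)
    + (-p 0 5 - 2 * p 1 4 - p 2 6) • (ε 0 * ε 2 * ε 3 * ε 5 * ε 6)
    + (-p 0 2 + 2 * p 1 3 + p 5 6) • (ε 0 * ε 2 * ε 4 * ε 5 * ε 6)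
    + (-p 0 3 - 2 * p 1 2 + p 4 6) • (ε 0 * ε 3 * ε 4 * ε 5 * ε 6)
    + (2 * p 0 6 - p 2 5 - p 3 4) • (ε 1 * ε 2 * ε 3 * ε 4 * ε 5)
    + (-2 * p 0 5 - p 1 4 - p 2 6) • (ε 1 * ε 2 * ε 3 * ε 4 * ε 6)
    + (2 * p 0 4 - p 1 5 + p 3 6) • (ε 1 * ε 2 * ε 3 * ε 5 * ε 6)
    + (-2 * p 0 3 - p 1 2 + p 4 6) • (ε 1 * ε 2 * ε 4 * ε 5 * ε 6)
    + (2 * p 0 2 - p 1 3 - p 5 6) • (ε 1 * ε 3 * ε 4 * ε 5 * ε 6)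
    + (-2 * p 0 1 - p 2 3 - p 4 5) • (ε 2 * ε 3 * ε 4 * ε 5 * ε 6)

def sigma0Quad (p : Fin 7 → Fin 7 → ℝ) : ℝ :=
  2 * ∑ a, ∑ b with a < b, p a b ^ 2
    + 6 * (pluckerForm p 2 3 4 5 + pluckerForm p 0 1 4 5 + pluckerForm p 0 1 2 3
      + pluckerForm p 1 3 5 6 - pluckerForm p 1 2 4 6 - pluckerForm p 0 3 4 6
      - pluckerForm p 0 2 5 6)

lemma sigma0Quad_wedgeCoord (X Y : V7) :
    sigma0Quad (wedgeCoord X Y) = 2 * ∑ a, ∑ b with a < b, wedgeCoord X Y a b ^ 2 := by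
  simp only [sigma0Quad, pluckerForm_wedgeCoord]
  ring

lemma ic_ic_sigma0 (X Y : V7) : ic X (ic Y sigma0) = contractSigma0 (wedgeCoord X Y) := by
  simp only [sigma0, mul_assoc, map_add, map_sub, ic_ε_mul, ic_ε, map_smul, mul_sub, smul_sub,
    smul_smul, mul_smul_comm, mul_one]
  simp only [contractSigma0, wedgeCoord]
  module

lemma contractSigma0_mul_starSigma0 (p : Fin 7 → Fin 7 → ℝ) :
    contractSigma0 p * starSigma0 = contractSigma0WedgeStar p := by
  simp only [contractSigma0, starSigma0, mul_assoc, add_mul, mul_add, mul_sub,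
    smul_mul_assoc]
  simp +decide only [ε_mul_ε_mul_self, ε_mul_self, ε_mul_ε_mul_of_lt,
    ε_mul_ε_of_lt, mul_neg, smul_neg, mul_zero, smul_zero, neg_neg]
  simp only [contractSigma0WedgeStar, mul_assoc]
  module

lemma contractSigma0_mul_contractSigma0WedgeStar (p : Fin 7 → Fin 7 → ℝ) :
    contractSigma0 p * contractSigma0WedgeStar p = sigma0Quad p • vol7 := by
  simp only [contractSigma0, contractSigma0WedgeStar, mul_assoc, add_mul, mul_add,
    smul_mul_assoc, mul_smul_comm]
  simp +decide only [ε_mul_ε_mul_self, ε_mul_self, ε_mul_ε_mul_of_lt,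
    ε_mul_ε_of_lt, mul_neg, neg_mul, smul_neg, mul_zero, smul_zero, neg_neg]
  simp only [sigma0Quad, pluckerForm, vol7, Finset.sum_filter, Fin.sum_univ_seven, mul_assoc]
  simp +decide only [if_true, if_false]
  module

lemma contractSigma0_sq_mul_starSigma0 (p : Fin 7 → Fin 7 → ℝ) :
    contractSigma0 p * contractSigma0 p * starSigma0 = sigma0Quad p • vol7 := by
  rw [mul_assoc, contractSigma0_mul_starSigma0, contractSigma0_mul_contractSigma0WedgeStar]

/-- for the standard `G₂` 4-form `σ₀` and any two linearly independent
vectors `X, Y ∈ ℝ⁷`, the 2-form `ι_X ι_Y σ₀` has nonzero square. -/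
theorem stmt8_double_contraction_square_ne_zero (X Y : V7)
    (hXY : LinearIndependent ℝ ![X, Y]) :
    ic X (ic Y sigma0) * ic X (ic Y sigma0) ≠ 0 := by
  rw [ic_ic_sigma0]
  intro hsq
  have hvol : sigma0Quad (wedgeCoord X Y) • vol7 = 0 := by
    rw [← contractSigma0_sq_mul_starSigma0, hsq, zero_mul]
  rw [sigma0Quad_wedgeCoord] at hvol
  exact smul_ne_zero (mul_ne_zero two_ne_zero (sum_sq_wedgeCoord_ne_zero hXY)) vol7_ne_zero hvol
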